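/- Let g be a finite-dimensional real quadratic Lie algebra, and let D = Σ_a e_a ⊗ e^a − 1 ⊗ C be the cubic Dirac operator in the noncommutative Weil algebra W(g) = U(g) ⊗ Cl(g). Then D² lies in the center of U(g) ⊗ Cl(g): D²·x = x·D² for every x ∈ U(g) ⊗ Cl(g). -/

import Mathlib

/-!
Write `S = ∑ₐ eₐ ⊗ eᵃ`, so that `D = S - 1 ⊗ C`. In `Cl(g)` the element
`γ(x) = ½ ∑ₐ eᵃ [eₐ, x]` implements `ad x` by commutators, `γ` is a Lie algebra map, and
`C = -⅓ ∑ₐ eᵃ γ(eₐ)`. Hence `C v + v C = -γ(v)`, and `[γ(x), C] = 0` because the Casimir tensor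
`∑ₐ eₐ ⊗ eᵃ` is `ad`-invariant; so `[C², v] = [C, C v + v C] = 0` and `C²` is central in `Cl(g)`.
In `U(g) ⊗ Cl(g)` the cross term `S (1 ⊗ C) + (1 ⊗ C) S = -∑ₐ eₐ ⊗ γ(eᵃ)` cancels the
antisymmetric half of `S²`, leaving `D² = ½ Ω ⊗ 1 + 1 ⊗ C²` with `Ω = ∑ₐ eᵃ eₐ` the Casimir
element, which is central in `U(g)` by the same invariance.
-/

open CliffordAlgebra
open scoped TensorProduct

section DualBasis

variable {R M κ : Type*} [CommRing R] [AddCommGroup M] [Module R M] [Fintype κ] [DecidableEq κ]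
  {B : M →ₗ[R] M →ₗ[R] R} {e : Module.Basis κ R M} {e' : κ → M}

theorem sum_apply_dual_smul_basis (h_dual : ∀ a b : κ, B (e a) (e' b) = if a = b then 1 else 0)
    (v : M) : ∑ a, B v (e' a) • e a = v := by
  have h_coord (a : κ) : B.flip (e' a) = e.coord a :=
    e.ext fun b => by simp [h_dual, Finsupp.single_apply]
  simp_rw [← LinearMap.flip_apply (f := B), h_coord, Module.Basis.coord_apply, e.sum_repr]

theorem sum_apply_basis_smul_dual (hB_symm : ∀ x y : M, B x y = B y x)
    (hB_nondeg : ∀ x : M, (∀ y : M, B x y = 0) → x = 0)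
    (h_dual : ∀ a b : κ, B (e a) (e' b) = if a = b then 1 else 0) (v : M) :
    ∑ a, B (e a) v • e' a = v := by
  refine sub_eq_zero.mp (hB_nondeg _ fun y => ?_)
  have h_zero : B (∑ a, B (e a) v • e' a - v) = 0 :=
    e.ext fun b => by simp [hB_symm _ (e b), h_dual]
  rw [h_zero, LinearMap.zero_apply]

/-- The Casimir tensor `∑ a, e a ⊗ e' a` is annihilated by every `B`-skew-adjoint endomorphism. -/
theorem sum_skewAdjoint_dual_add (hB_symm : ∀ x y : M, B x y = B y x)
    (hB_nondeg : ∀ x : M, (∀ y : M, B x y = 0) → x = 0)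
    (h_dual : ∀ a b : κ, B (e a) (e' b) = if a = b then 1 else 0)
    {T : M →ₗ[R] M} (hT : ∀ u w, B (T u) w = -B u (T w))
    {N : Type*} [AddCommGroup N] [Module R N] (Φ : M →ₗ[R] M →ₗ[R] N) :
    ∑ a, (Φ (T (e' a)) (e a) + Φ (e' a) (T (e a))) = 0 := by
  have h_left (a : κ) : Φ (T (e' a)) (e a) = ∑ b, B (e b) (T (e' a)) • Φ (e' b) (e a) := by
    conv_lhs => rw [← sum_apply_basis_smul_dual hB_symm hB_nondeg h_dual (T (e' a))]
    simp
  have h_right (a : κ) : Φ (e' a) (T (e a)) = ∑ b, B (T (e a)) (e' b) • Φ (e' a) (e b) := by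
    conv_lhs => rw [← sum_apply_dual_smul_basis h_dual (T (e a))]
    simp
  rw [Finset.sum_add_distrib]
  simp_rw [h_left, h_right]
  rw [Finset.sum_comm (f := fun a b => B (T (e a)) (e' b) • Φ (e' a) (e b)),
    ← Finset.sum_add_distrib]
  refine Finset.sum_eq_zero fun a _ => ?_
  rw [← Finset.sum_add_distrib]
  refine Finset.sum_eq_zero fun b _ => ?_
  rw [← add_smul, hT, add_neg_cancel, zero_smul]

end DualBasis

theorem apply_lie_left_eq_neg {R g : Type*} [CommRing R] [LieRing g] [LieAlgebra R g]
    {B : g →ₗ[R] g →ₗ[R] R} (hB_inv : ∀ x y z : g, B ⁅x, y⁆ z = B x ⁅y, z⁆) (x u w : g) :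
    B ⁅x, u⁆ w = -B u ⁅x, w⁆ := by
  rw [← lie_skew, map_neg, LinearMap.neg_apply, hB_inv]

namespace UniversalEnvelopingAlgebra

variable {R L : Type*} [CommRing R] [LieRing L] [LieAlgebra R L]

theorem adjoin_range_ι :
    Algebra.adjoin R (Set.range (ι R : L → UniversalEnvelopingAlgebra R L)) = ⊤ := by
  have h_surj : Function.Surjective (mkAlgHom R L) := RingCon.mkₐ_surjective _
  rw [← (mkAlgHom R L).range_eq_top.mpr h_surj, ← Algebra.map_top, ← TensorAlgebra.adjoin_range_ι,
    AlgHom.map_adjoin, ← Set.range_comp]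
  rfl

end UniversalEnvelopingAlgebra

theorem mul_mul_sub_mul_mul {A : Type*} [Ring A] (z p q : A) :
    z * (p * q) - p * q * z = (z * p - p * z) * q + p * (z * q - q * z) := by
  noncomm_ring

section Clifford

variable {g κ : Type*} [LieRing g] [LieAlgebra ℝ g] [Fintype κ] {B : g →ₗ[ℝ] g →ₗ[ℝ] ℝ}
  {Q : QuadraticForm ℝ g}

theorem ι_mul_ι_add_swap_of_eq_half (hB_symm : ∀ x y : g, B x y = B y x)
    (hQ : ∀ v : g, Q v = (1 / 2 : ℝ) * B v v) (u v : g) :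
    ι Q u * ι Q v + ι Q v * ι Q u = B u v • 1 := by
  rw [ι_mul_ι_add_swap, Algebra.algebraMap_eq_smul_one, QuadraticMap.polar, hQ, hQ, hQ,
    map_add, map_add, LinearMap.add_apply, LinearMap.add_apply, hB_symm v u]
  ring_nf

theorem ι_mul_ι_mul_ι_sub (hB_symm : ∀ x y : g, B x y = B y x)
    (hQ : ∀ v : g, Q v = (1 / 2 : ℝ) * B v v) (u w v : g) :
    ι Q u * ι Q w * ι Q v - ι Q v * (ι Q u * ι Q w) = B w v • ι Q u - B u v • ι Q w := by
  calc ι Q u * ι Q w * ι Q v - ι Q v * (ι Q u * ι Q w)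
      = ι Q u * (ι Q w * ι Q v + ι Q v * ι Q w) - (ι Q u * ι Q v + ι Q v * ι Q u) * ι Q w := by
        noncomm_ring
    _ = B w v • ι Q u - B u v • ι Q w := by
        rw [ι_mul_ι_add_swap_of_eq_half hB_symm hQ, ι_mul_ι_add_swap_of_eq_half hB_symm hQ,
          mul_smul_comm, smul_mul_assoc, mul_one, one_mul]

variable (Q) in
/-- The image `γ(x)` of `ad x` under the standard map `𝔰𝔬(g) → Cl(g)`. -/
noncomputable def cliffordAd (e e' : κ → g) : g →ₗ[ℝ] CliffordAlgebra Q :=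
  (1 / 2 : ℝ) • ∑ a, LinearMap.mulLeft ℝ (ι Q (e' a)) ∘ₗ ι Q ∘ₗ LieAlgebra.ad ℝ g (e a)

theorem cliffordAd_apply (e e' : κ → g) (x : g) :
    cliffordAd Q e e' x = (1 / 2 : ℝ) • ∑ a, ι Q (e' a) * ι Q ⁅e a, x⁆ := by
  simp [cliffordAd]

variable [DecidableEq κ] {e : Module.Basis κ ℝ g} {e' : κ → g}

theorem cliffordAd_mul_ι_sub (hB_symm : ∀ x y : g, B x y = B y x)
    (hB_nondeg : ∀ x : g, (∀ y : g, B x y = 0) → x = 0)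
    (hB_inv : ∀ x y z : g, B ⁅x, y⁆ z = B x ⁅y, z⁆)
    (h_dual : ∀ a b : κ, B (e a) (e' b) = if a = b then 1 else 0)
    (hQ : ∀ v : g, Q v = (1 / 2 : ℝ) * B v v) (x v : g) :
    cliffordAd Q e e' x * ι Q v - ι Q v * cliffordAd Q e e' x = ι Q ⁅x, v⁆ := by
  have h_left : ∑ a, B ⁅e a, x⁆ v • ι Q (e' a) = ι Q ⁅x, v⁆ := by
    simp_rw [hB_inv, ← map_smul, ← map_sum, sum_apply_basis_smul_dual hB_symm hB_nondeg h_dual]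
  have h_right : ∑ a, B (e' a) v • ι Q ⁅e a, x⁆ = -ι Q ⁅x, v⁆ := by
    simp_rw [← map_smul, ← smul_lie, ← map_sum, ← sum_lie, hB_symm _ v,
      sum_apply_dual_smul_basis h_dual, ← map_neg, lie_skew]
  rw [cliffordAd_apply, smul_mul_assoc, mul_smul_comm, ← smul_sub, Finset.sum_mul,
    Finset.mul_sum, ← Finset.sum_sub_distrib]
  simp_rw [ι_mul_ι_mul_ι_sub hB_symm hQ]
  rw [Finset.sum_sub_distrib, h_left, h_right]
  module

theorem cliffordAd_mul_cliffordAd_sub (hB_symm : ∀ x y : g, B x y = B y x)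
    (hB_nondeg : ∀ x : g, (∀ y : g, B x y = 0) → x = 0)
    (hB_inv : ∀ x y z : g, B ⁅x, y⁆ z = B x ⁅y, z⁆)
    (h_dual : ∀ a b : κ, B (e a) (e' b) = if a = b then 1 else 0)
    (hQ : ∀ v : g, Q v = (1 / 2 : ℝ) * B v v) (x y : g) :
    cliffordAd Q e e' x * cliffordAd Q e e' y - cliffordAd Q e e' y * cliffordAd Q e e' x
      = cliffordAd Q e e' ⁅x, y⁆ := by
  have h_inv := sum_skewAdjoint_dual_add hB_symm hB_nondeg h_dual
    (fun u w => apply_lie_left_eq_neg hB_inv x u w) (T := LieAlgebra.ad ℝ g x)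
    ((LinearMap.mul ℝ _).compl₁₂ (ι Q) (ι Q ∘ₗ LieAlgebra.ad ℝ g y))
  simp only [LinearMap.compl₁₂_apply, LinearMap.mul_apply', LinearMap.comp_apply,
    LieAlgebra.ad_apply] at h_inv
  have h_jacobi : ∑ a, (ι Q ⁅x, e' a⁆ * ι Q ⁅e a, y⁆ + ι Q (e' a) * ι Q ⁅⁅x, e a⁆, y⁆) = 0 := by
    rw [← neg_eq_zero, ← h_inv, ← Finset.sum_neg_distrib]
    refine Finset.sum_congr rfl fun a _ => ?_
    rw [← lie_skew (e a) y, ← lie_skew ⁅x, e a⁆ y]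
    simp only [map_neg, mul_neg, neg_add, neg_neg]
  rw [cliffordAd_apply (x := y), cliffordAd_apply (x := ⁅x, y⁆), mul_smul_comm, smul_mul_assoc,
    ← smul_sub, Finset.mul_sum, Finset.sum_mul, ← Finset.sum_sub_distrib]
  simp_rw [mul_mul_sub_mul_mul, cliffordAd_mul_ι_sub hB_symm hB_nondeg hB_inv h_dual hQ,
    leibniz_lie x (e _) y, map_add, mul_add]
  simp_rw [← add_assoc]
  rw [Finset.sum_add_distrib, h_jacobi, zero_add]

theorem sum_apply_lie_smul_ι_mul_ι_mul_ι (hB_symm : ∀ x y : g, B x y = B y x)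
    (hB_nondeg : ∀ x : g, (∀ y : g, B x y = 0) → x = 0)
    (hB_inv : ∀ x y z : g, B ⁅x, y⁆ z = B x ⁅y, z⁆)
    (h_dual : ∀ a b : κ, B (e a) (e' b) = if a = b then 1 else 0) :
    ∑ a, ∑ b, ∑ c, B (e a) ⁅e b, e c⁆ • (ι Q (e' a) * ι Q (e' b) * ι Q (e' c))
      = (-2 : ℝ) • ∑ a, ι Q (e' a) * cliffordAd Q e e' (e a) := by
  have h_inner (a b : κ) : ∑ c, B (e a) ⁅e b, e c⁆ • (ι Q (e' a) * ι Q (e' b) * ι Q (e' c))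
      = ι Q (e' a) * ι Q (e' b) * ι Q ⁅e a, e b⁆ := by
    simp_rw [← mul_smul_comm, ← Finset.mul_sum, ← map_smul, ← map_sum, ← hB_inv, hB_symm _ (e _),
      sum_apply_basis_smul_dual hB_symm hB_nondeg h_dual]
  simp_rw [h_inner, cliffordAd_apply, mul_smul_comm, Finset.smul_sum, Finset.mul_sum, smul_smul,
    ← mul_assoc, show (-2 : ℝ) * (1 / 2) = -1 by norm_num, neg_one_smul, ← Finset.sum_neg_distrib,
    ← mul_neg, ← map_neg, lie_skew]

theorem cubic_mul_ι_add_ι_mul_cubic (hB_symm : ∀ x y : g, B x y = B y x)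
    (hB_nondeg : ∀ x : g, (∀ y : g, B x y = 0) → x = 0)
    (hB_inv : ∀ x y z : g, B ⁅x, y⁆ z = B x ⁅y, z⁆)
    (h_dual : ∀ a b : κ, B (e a) (e' b) = if a = b then 1 else 0)
    (hQ : ∀ v : g, Q v = (1 / 2 : ℝ) * B v v) {C : CliffordAlgebra Q}
    (hC : C = (-1 / 3 : ℝ) • ∑ a, ι Q (e' a) * cliffordAd Q e e' (e a)) (v : g) :
    C * ι Q v + ι Q v * C = -cliffordAd Q e e' v := by
  have h_term (u w : g) :
      ι Q u * cliffordAd Q e e' w * ι Q v + ι Q v * (ι Q u * cliffordAd Q e e' w)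
        = B u v • cliffordAd Q e e' w + ι Q u * ι Q ⁅w, v⁆ := by
    calc _ = ι Q u * (cliffordAd Q e e' w * ι Q v - ι Q v * cliffordAd Q e e' w)
          + (ι Q u * ι Q v + ι Q v * ι Q u) * cliffordAd Q e e' w := by noncomm_ring
      _ = _ := by
        rw [cliffordAd_mul_ι_sub hB_symm hB_nondeg hB_inv h_dual hQ,
          ι_mul_ι_add_swap_of_eq_half hB_symm hQ, smul_mul_assoc, one_mul, add_comm]
  have h_first : ∑ a, B (e' a) v • cliffordAd Q e e' (e a) = cliffordAd Q e e' v := by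
    simp_rw [← map_smul, ← map_sum, hB_symm _ v, sum_apply_dual_smul_basis h_dual]
  have h_second : ∑ a, ι Q (e' a) * ι Q ⁅e a, v⁆ = (2 : ℝ) • cliffordAd Q e e' v := by
    rw [cliffordAd_apply, smul_smul]
    norm_num
  rw [hC, smul_mul_assoc, mul_smul_comm, ← smul_add, Finset.sum_mul, Finset.mul_sum,
    ← Finset.sum_add_distrib]
  simp_rw [h_term]
  rw [Finset.sum_add_distrib, h_first, h_second]
  module

theorem cliffordAd_mul_cubic (hB_symm : ∀ x y : g, B x y = B y x)
    (hB_nondeg : ∀ x : g, (∀ y : g, B x y = 0) → x = 0)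
    (hB_inv : ∀ x y z : g, B ⁅x, y⁆ z = B x ⁅y, z⁆)
    (h_dual : ∀ a b : κ, B (e a) (e' b) = if a = b then 1 else 0)
    (hQ : ∀ v : g, Q v = (1 / 2 : ℝ) * B v v) {C : CliffordAlgebra Q}
    (hC : C = (-1 / 3 : ℝ) • ∑ a, ι Q (e' a) * cliffordAd Q e e' (e a)) (x : g) :
    cliffordAd Q e e' x * C = C * cliffordAd Q e e' x := by
  have h_inv := sum_skewAdjoint_dual_add hB_symm hB_nondeg h_dual
    (fun u w => apply_lie_left_eq_neg hB_inv x u w) (T := LieAlgebra.ad ℝ g x)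
    ((LinearMap.mul ℝ _).compl₁₂ (ι Q) (cliffordAd Q e e'))
  simp only [LinearMap.compl₁₂_apply, LinearMap.mul_apply', LieAlgebra.ad_apply] at h_inv
  rw [← sub_eq_zero, hC, mul_smul_comm, smul_mul_assoc, ← smul_sub, Finset.mul_sum,
    Finset.sum_mul, ← Finset.sum_sub_distrib]
  simp_rw [mul_mul_sub_mul_mul, cliffordAd_mul_ι_sub hB_symm hB_nondeg hB_inv h_dual hQ,
    cliffordAd_mul_cliffordAd_sub hB_symm hB_nondeg hB_inv h_dual hQ]
  rw [h_inv, smul_zero]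

theorem commute_cubic_mul_self (hB_symm : ∀ x y : g, B x y = B y x)
    (hB_nondeg : ∀ x : g, (∀ y : g, B x y = 0) → x = 0)
    (hB_inv : ∀ x y z : g, B ⁅x, y⁆ z = B x ⁅y, z⁆)
    (h_dual : ∀ a b : κ, B (e a) (e' b) = if a = b then 1 else 0)
    (hQ : ∀ v : g, Q v = (1 / 2 : ℝ) * B v v) {C : CliffordAlgebra Q}
    (hC : C = (-1 / 3 : ℝ) • ∑ a, ι Q (e' a) * cliffordAd Q e e' (e a)) (z : CliffordAlgebra Q) :
    Commute (C * C) z := by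
  refine Algebra.commute_of_mem_adjoin_of_forall_mem_commute
    ((adjoin_range_ι (Q := Q)).symm ▸ Algebra.mem_top) ?_
  rintro _ ⟨v, rfl⟩
  rw [commute_iff_eq, ← sub_eq_zero]
  calc C * C * ι Q v - ι Q v * (C * C)
      = C * (C * ι Q v + ι Q v * C) - (C * ι Q v + ι Q v * C) * C := by noncomm_ring
    _ = cliffordAd Q e e' v * C - C * cliffordAd Q e e' v := by
        rw [cubic_mul_ι_add_ι_mul_cubic hB_symm hB_nondeg hB_inv h_dual hQ hC]
        noncomm_ring
    _ = 0 := by rw [cliffordAd_mul_cubic hB_symm hB_nondeg hB_inv h_dual hQ hC, sub_self]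

end Clifford

theorem commute_tmul_of_forall_commute {R A C : Type*} [CommSemiring R] [Semiring A] [Algebra R A]
    [Semiring C] [Algebra R C] {a : A} {c : C} (ha : ∀ x, Commute a x) (hc : ∀ y, Commute c y)
    (z : A ⊗[R] C) : Commute (a ⊗ₜ[R] c) z := by
  induction z using TensorProduct.induction_on with
  | zero => exact Commute.zero_right _
  | tmul x y => exact (ha x).tmul (hc y)
  | add x y hx hy => exact hx.add_right hy

section Weil

attribute [local instance] LieRing.ofAssociativeRing

local notation "ιU" => UniversalEnvelopingAlgebra.ι ℝ

variable {g κ : Type*} [LieRing g] [LieAlgebra ℝ g] [Fintype κ] [DecidableEq κ]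
  {B : g →ₗ[ℝ] g →ₗ[ℝ] ℝ} {Q : QuadraticForm ℝ g} {e : Module.Basis κ ℝ g} {e' : κ → g}

theorem commute_sum_ι_dual_mul_ι (hB_symm : ∀ x y : g, B x y = B y x)
    (hB_nondeg : ∀ x : g, (∀ y : g, B x y = 0) → x = 0)
    (hB_inv : ∀ x y z : g, B ⁅x, y⁆ z = B x ⁅y, z⁆)
    (h_dual : ∀ a b : κ, B (e a) (e' b) = if a = b then 1 else 0)
    (x : UniversalEnvelopingAlgebra ℝ g) :
    Commute (∑ a, ιU (e' a) * ιU (e a)) x := by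
  refine Algebra.commute_of_mem_adjoin_of_forall_mem_commute
    (UniversalEnvelopingAlgebra.adjoin_range_ι (R := ℝ) (L := g) ▸ Algebra.mem_top) ?_
  rintro _ ⟨y, rfl⟩
  have h_inv := sum_skewAdjoint_dual_add hB_symm hB_nondeg h_dual
    (fun u w => apply_lie_left_eq_neg hB_inv y u w) (T := LieAlgebra.ad ℝ g y)
    ((LinearMap.mul ℝ _).compl₁₂ (ιU : g →ₗ⁅ℝ⁆ _).toLinearMap
      (ιU : g →ₗ⁅ℝ⁆ _).toLinearMap)
  simp only [LinearMap.compl₁₂_apply, LinearMap.mul_apply', LieAlgebra.ad_apply,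
    LieHom.coe_toLinearMap, LieHom.map_lie, Ring.lie_def] at h_inv
  rw [commute_iff_eq, eq_comm, ← sub_eq_zero, Finset.mul_sum, Finset.sum_mul,
    ← Finset.sum_sub_distrib]
  simpa only [mul_mul_sub_mul_mul] using h_inv

theorem two_smul_sum_ι_tmul_ι_sq (hB_symm : ∀ x y : g, B x y = B y x)
    (h_dual : ∀ a b : κ, B (e a) (e' b) = if a = b then 1 else 0)
    (hQ : ∀ v : g, Q v = (1 / 2 : ℝ) * B v v) :
    (2 : ℝ) • ((∑ a, ιU (e a) ⊗ₜ[ℝ] ι Q (e' a)) * ∑ a, ιU (e a) ⊗ₜ[ℝ] ι Q (e' a))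
      = ∑ a, ∑ b, ιU ⁅e a, e b⁆ ⊗ₜ[ℝ] (ι Q (e' a) * ι Q (e' b))
        + (∑ a, ιU (e' a) * ιU (e a)) ⊗ₜ[ℝ] (1 : CliffordAlgebra Q) := by
  have h_term (a b : κ) :
      (ιU (e a) * ιU (e b)) ⊗ₜ[ℝ] (ι Q (e' a) * ι Q (e' b))
        + (ιU (e b) * ιU (e a)) ⊗ₜ[ℝ] (ι Q (e' b) * ι Q (e' a))
      = ιU ⁅e a, e b⁆ ⊗ₜ[ℝ] (ι Q (e' a) * ι Q (e' b))
        + B (e' a) (e' b) • ((ιU (e b) * ιU (e a)) ⊗ₜ[ℝ] (1 : CliffordAlgebra Q)) := by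
    rw [eq_sub_of_add_eq' (ι_mul_ι_add_swap_of_eq_half hB_symm hQ (e' a) (e' b)),
      LieHom.map_lie, Ring.lie_def, TensorProduct.tmul_sub, TensorProduct.sub_tmul,
      TensorProduct.tmul_smul]
    abel
  have h_casimir (a : κ) :
      ∑ b, B (e' a) (e' b) • ((ιU (e b) * ιU (e a)) ⊗ₜ[ℝ] (1 : CliffordAlgebra Q))
        = (ιU (e' a) * ιU (e a)) ⊗ₜ[ℝ] 1 := by
    simp_rw [TensorProduct.smul_tmul', ← TensorProduct.sum_tmul, ← smul_mul_assoc,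
      ← Finset.sum_mul, ← map_smul, ← map_sum, sum_apply_dual_smul_basis h_dual]
  rw [two_smul, Finset.sum_mul_sum]
  nth_rewrite 2 [Finset.sum_comm]
  simp_rw [← Finset.sum_add_distrib, Algebra.TensorProduct.tmul_mul_tmul, h_term,
    Finset.sum_add_distrib, h_casimir, ← TensorProduct.sum_tmul]

theorem sum_ι_tmul_cliffordAd_dual (hB_symm : ∀ x y : g, B x y = B y x)
    (hB_nondeg : ∀ x : g, (∀ y : g, B x y = 0) → x = 0)
    (hB_inv : ∀ x y z : g, B ⁅x, y⁆ z = B x ⁅y, z⁆)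
    (h_dual : ∀ a b : κ, B (e a) (e' b) = if a = b then 1 else 0) :
    ∑ a, ιU (e a) ⊗ₜ[ℝ] cliffordAd Q e e' (e' a)
      = (-1 / 2 : ℝ) • ∑ a, ∑ b, ιU ⁅e a, e b⁆ ⊗ₜ[ℝ] (ι Q (e' a) * ι Q (e' b)) := by
  have h_inv (b : κ) := sum_skewAdjoint_dual_add hB_symm hB_nondeg h_dual
    (fun u w => apply_lie_left_eq_neg hB_inv (e b) u w) (T := LieAlgebra.ad ℝ g (e b))
    ((TensorProduct.mk ℝ _ _).compl₁₂ (ιU : g →ₗ⁅ℝ⁆ _).toLinearMap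
      (LinearMap.mulLeft ℝ (ι Q (e' b)) ∘ₗ ι Q)).flip
  simp only [LinearMap.flip_apply, LinearMap.compl₁₂_apply, TensorProduct.mk_apply,
    LinearMap.comp_apply, LinearMap.mulLeft_apply, LieAlgebra.ad_apply,
    LieHom.coe_toLinearMap, Finset.sum_add_distrib] at h_inv
  simp_rw [cliffordAd_apply, TensorProduct.tmul_smul, TensorProduct.tmul_sum, ← Finset.smul_sum]
  rw [Finset.sum_comm]
  simp_rw [eq_neg_of_add_eq_zero_left (h_inv _), Finset.sum_neg_distrib, smul_neg, ← neg_smul]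
  norm_num

theorem dirac_sq_eq (hB_symm : ∀ x y : g, B x y = B y x)
    (hB_nondeg : ∀ x : g, (∀ y : g, B x y = 0) → x = 0)
    (hB_inv : ∀ x y z : g, B ⁅x, y⁆ z = B x ⁅y, z⁆)
    (h_dual : ∀ a b : κ, B (e a) (e' b) = if a = b then 1 else 0)
    (hQ : ∀ v : g, Q v = (1 / 2 : ℝ) * B v v) {C : CliffordAlgebra Q}
    (hC : ∀ v : g, C * ι Q v + ι Q v * C = -cliffordAd Q e e' v)
    {D : UniversalEnvelopingAlgebra ℝ g ⊗[ℝ] CliffordAlgebra Q}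
    (hD : D = ∑ a, ιU (e a) ⊗ₜ[ℝ] ι Q (e' a) - (1 : UniversalEnvelopingAlgebra ℝ g) ⊗ₜ[ℝ] C) :
    D ^ 2 = (1 / 2 : ℝ) • ((∑ a, ιU (e' a) * ιU (e a)) ⊗ₜ[ℝ] (1 : CliffordAlgebra Q))
      + (1 : UniversalEnvelopingAlgebra ℝ g) ⊗ₜ[ℝ] (C * C) := by
  set S := ∑ a, ιU (e a) ⊗ₜ[ℝ] ι Q (e' a)
  have h_cross : S * ((1 : UniversalEnvelopingAlgebra ℝ g) ⊗ₜ[ℝ] C) + (1 ⊗ₜ[ℝ] C) * S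
      = -∑ a, ιU (e a) ⊗ₜ[ℝ] cliffordAd Q e e' (e' a) := by
    simp_rw [S, Finset.sum_mul, Finset.mul_sum, ← Finset.sum_add_distrib,
      Algebra.TensorProduct.tmul_mul_tmul, mul_one, one_mul, ← TensorProduct.tmul_add,
      add_comm (ι Q _ * C), hC, TensorProduct.tmul_neg, Finset.sum_neg_distrib]
  have h_sq : S * S = (1 / 2 : ℝ) • ((∑ a, ιU (e' a) * ιU (e a)) ⊗ₜ[ℝ] (1 : CliffordAlgebra Q))
      - ∑ a, ιU (e a) ⊗ₜ[ℝ] cliffordAd Q e e' (e' a) := by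
    rw [sum_ι_tmul_cliffordAd_dual hB_symm hB_nondeg hB_inv h_dual,
      show S * S = (1 / 2 : ℝ) • ((2 : ℝ) • (S * S)) by module,
      two_smul_sum_ι_tmul_ι_sq hB_symm h_dual hQ]
    module
  calc D ^ 2 = S * S - (S * (1 ⊗ₜ[ℝ] C) + (1 ⊗ₜ[ℝ] C) * S) + (1 ⊗ₜ[ℝ] C) * (1 ⊗ₜ[ℝ] C) := by
        rw [hD, sq]
        noncomm_ring
    _ = _ := by
        rw [h_sq, h_cross, Algebra.TensorProduct.tmul_mul_tmul, one_mul]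
        abel

end Weil

theorem cubic_dirac_operator_square_central_general
    {g : Type*} [LieRing g] [LieAlgebra ℝ g]
    -- the invariant, non-degenerate, symmetric bilinear form B
    (B : g →ₗ[ℝ] g →ₗ[ℝ] ℝ)
    (hB_symm : ∀ x y : g, B x y = B y x)
    (hB_nondeg : ∀ x : g, (∀ y : g, B x y = 0) → x = 0)
    (hB_inv : ∀ x y z : g, B ⁅x, y⁆ z = B x ⁅y, z⁆)
    -- a basis (e_a) and its B-dual basis (e^a)
    {κ : Type*} [Fintype κ] [DecidableEq κ] (e : Module.Basis κ ℝ g) (e' : κ → g)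
    (h_dual : ∀ a b : κ, B (e a) (e' b) = if a = b then 1 else 0)
    -- the Clifford algebra of the quadratic form Q(v) = (1/2)·B(v,v)
    (Q : QuadraticForm ℝ g) (hQ : ∀ v : g, Q v = (1 / 2 : ℝ) * B v v)
    -- the structure constants f_{abc}
    (f : κ → κ → κ → ℝ) (hf : ∀ a b c : κ, f a b c = B (e a) ⁅e b, e c⁆)
    -- the cubic element C
    (C : CliffordAlgebra Q)
    (hC : C = (1 / 6 : ℝ) •
      ∑ a : κ, ∑ b : κ, ∑ c : κ, f a b c • (ι Q (e' a) * ι Q (e' b) * ι Q (e' c)))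
    -- the cubic Dirac operator D in W(g) = U(g) ⊗ Cl(g)
    (D : UniversalEnvelopingAlgebra ℝ g ⊗[ℝ] CliffordAlgebra Q)
    (hD : D = (∑ a : κ,
        (UniversalEnvelopingAlgebra.ι ℝ (e a)) ⊗ₜ[ℝ] (ι Q (e' a)))
      - (1 : UniversalEnvelopingAlgebra ℝ g) ⊗ₜ[ℝ] C) :
    ∀ x : UniversalEnvelopingAlgebra ℝ g ⊗[ℝ] CliffordAlgebra Q,
      D ^ 2 * x = x * D ^ 2 := by
  have hC_ad : C = (-1 / 3 : ℝ) • ∑ a, ι Q (e' a) * cliffordAd Q e e' (e a) := by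
    simp_rw [hC, hf, sum_apply_lie_smul_ι_mul_ι_mul_ι hB_symm hB_nondeg hB_inv h_dual, smul_smul]
    norm_num
  have h_casimir := commute_sum_ι_dual_mul_ι hB_symm hB_nondeg hB_inv h_dual
  have h_cubic := commute_cubic_mul_self hB_symm hB_nondeg hB_inv h_dual hQ hC_ad
  intro x
  rw [dirac_sq_eq hB_symm hB_nondeg hB_inv h_dual hQ
    (cubic_mul_ι_add_ι_mul_cubic hB_symm hB_nondeg hB_inv h_dual hQ hC_ad) hD]
  exact ((commute_tmul_of_forall_commute h_casimir Commute.one_left x).smul_left _).add_left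
    (commute_tmul_of_forall_commute Commute.one_left h_cubic x) |>.eq

theorem cubic_dirac_operator_square_central
    {g : Type*} [LieRing g] [LieAlgebra ℝ g] [FiniteDimensional ℝ g]
    -- the invariant, non-degenerate, symmetric bilinear form B
    (B : g →ₗ[ℝ] g →ₗ[ℝ] ℝ)
    (hB_symm : ∀ x y : g, B x y = B y x)
    (hB_nondeg : ∀ x : g, (∀ y : g, B x y = 0) → x = 0)
    (hB_inv : ∀ x y z : g, B ⁅x, y⁆ z = B x ⁅y, z⁆)
    -- a basis (e_a) and its B-dual basis (e^a)
    {κ : Type*} [Fintype κ] [DecidableEq κ] (e : Module.Basis κ ℝ g) (e' : κ → g)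
    (h_dual : ∀ a b : κ, B (e a) (e' b) = if a = b then 1 else 0)
    -- the Clifford algebra of the quadratic form Q(v) = (1/2)·B(v,v)
    (Q : QuadraticForm ℝ g) (hQ : ∀ v : g, Q v = (1 / 2 : ℝ) * B v v)
    -- the structure constants f_{abc}
    (f : κ → κ → κ → ℝ) (hf : ∀ a b c : κ, f a b c = B (e a) ⁅e b, e c⁆)
    -- the cubic element C
    (C : CliffordAlgebra Q)
    (hC : C = (1 / 6 : ℝ) •
      ∑ a : κ, ∑ b : κ, ∑ c : κ, f a b c • (ι Q (e' a) * ι Q (e' b) * ι Q (e' c)))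
    -- the cubic Dirac operator D in W(g) = U(g) ⊗ Cl(g)
    (D : UniversalEnvelopingAlgebra ℝ g ⊗[ℝ] CliffordAlgebra Q)
    (hD : D = (∑ a : κ,
        (UniversalEnvelopingAlgebra.ι ℝ (e a)) ⊗ₜ[ℝ] (ι Q (e' a)))
      - (1 : UniversalEnvelopingAlgebra ℝ g) ⊗ₜ[ℝ] C) :
    ∀ x : UniversalEnvelopingAlgebra ℝ g ⊗[ℝ] CliffordAlgebra Q,
      D ^ 2 * x = x * D ^ 2 :=
  cubic_dirac_operator_square_central_general B hB_symm hB_nondeg hB_inv e e' h_dual Q hQ f hf C hC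
    D hD
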